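/- arXiv:2302.12942 — 2 statements merged into one kernel-verified Lean document; each statement's English description precedes it below -/
import Mathlib

section
/- Let q ≡ 1 (mod 4) be a prime power and a ∈ F_q with 2a - 1 a nonzero square, so that (a, a/(2a-1)) is a valid pair. Let φ = φ[a, a/(2a-1)] and α(j) = φ(φ^{-1}(j) - 1) + 1. If j ∈ F_q satisfies: aj and a(j-1) are nonzero squares, and a^{-1}j - 1 and a(j + a - 1) are non-squares, then α(α(j)) = j. -/
open Classical in
/-- The quadratic orthomorphism map: `0 ↦ 0`, `x ↦ a*x` if `x` is a (nonzero)
square, `x ↦ b*x` otherwise. -/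
noncomputable def phi {F : Type*} [Field F] (a b : F) (x : F) : F :=
  if x = 0 then 0 else if IsSquare x then a * x else b * x

/-- The row permutation `r_{0,1}` of the quadratic Latin square `L[a,b]`:
`α(j) = φ(φ⁻¹(j) - 1) + 1`. -/
noncomputable def alphaP {F : Type*} [Field F] (a b : F) (j : F) : F :=
  phi a b (Function.invFun (phi a b) j - 1) + 1

lemma phi_inj {F : Type*} [Field F] (a b : F) (ha : a ≠ 0) (hb : b ≠ 0)
    (hab : IsSquare (a * b)) : Function.Injective (phi a b) := by
  intro x y h
  by_cases hx : x = 0 <;> by_cases hy : y = 0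
  · rw [hx, hy]
  · exfalso
    simp only [phi, if_pos hx, if_neg hy] at h
    split_ifs at h <;> exact (mul_ne_zero (by assumption) hy) h.symm
  · exfalso
    simp only [phi, if_pos hy, if_neg hx] at h
    split_ifs at h <;> exact (mul_ne_zero (by assumption) hx) h
  · by_cases hxs : IsSquare x <;> by_cases hys : IsSquare y <;>
      simp only [phi, if_neg hx, if_neg hy, if_pos, if_neg, hxs, hys,
        if_true, if_false] at h
    · exact mul_left_cancel₀ ha h
    · exfalso
      apply hys
      have hyy : y = x * (a * b) * (b⁻¹ * b⁻¹) := by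
        apply mul_left_cancel₀ hb
        rw [← h]
        field_simp
      rw [hyy]
      exact (hxs.mul hab).mul ⟨b⁻¹, rfl⟩
    · exfalso
      apply hxs
      have hxx : x = y * (a * b) * (b⁻¹ * b⁻¹) := by
        apply mul_left_cancel₀ hb
        rw [h]
        field_simp
      rw [hxx]
      exact (hys.mul hab).mul ⟨b⁻¹, rfl⟩
    · exact mul_left_cancel₀ hb h

/-- Lemma on `L[a, a/(2a-1)]`: for `q ≡ 1 (mod 4)` and `2a-1` a nonzero square,
if `aj` and `a(j-1)` are nonzero squares and `a⁻¹j - 1`, `a(j+a-1)` are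
non-squares, then `α²(j) = j`. -/
theorem stmt8 {F : Type*} [Field F] [Fintype F]
    (h4 : Fintype.card F % 4 = 1)
    (a : F) (ha : 2 * a - 1 ≠ 0 ∧ IsSquare (2 * a - 1))
    (j : F)
    (h1 : a * j ≠ 0 ∧ IsSquare (a * j))
    (h2 : a * (j - 1) ≠ 0 ∧ IsSquare (a * (j - 1)))
    (h3 : a⁻¹ * j - 1 ≠ 0 ∧ ¬ IsSquare (a⁻¹ * j - 1))
    (h4' : a * (j + a - 1) ≠ 0 ∧ ¬ IsSquare (a * (j + a - 1))) :
    alphaP a (a / (2 * a - 1)) (alphaP a (a / (2 * a - 1)) j) = j := by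
  obtain ⟨h21, h2sq⟩ := ha
  have ha0 : a ≠ 0 := left_ne_zero_of_mul h1.1
  have hj0 : j ≠ 0 := right_ne_zero_of_mul h1.1
  set b : F := a / (2 * a - 1) with hbdef
  have hb0 : b ≠ 0 := div_ne_zero ha0 h21
  have hab : IsSquare (a * b) := by
    obtain ⟨s, hs⟩ := h2sq
    have hs0 : s ≠ 0 := by
      intro h
      exact h21 (by rw [hs, h, mul_zero])
    refine ⟨a / s, ?_⟩
    rw [hbdef, hs]
    field_simp
  have hinj := phi_inj a b ha0 hb0 hab
  -- Step 1 : invFun (phi a b) j = a⁻¹ * j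
  have hx1sq : IsSquare (a⁻¹ * j) := by
    have : a⁻¹ * j = (a * j) * (a⁻¹ * a⁻¹) := by
      field_simp
    rw [this]
    exact h1.2.mul ⟨a⁻¹, rfl⟩
  have hx10 : a⁻¹ * j ≠ 0 := mul_ne_zero (inv_ne_zero ha0) hj0
  have hphi1 : phi a b (a⁻¹ * j) = j := by
    rw [phi, if_neg hx10, if_pos hx1sq, ← mul_assoc, mul_inv_cancel₀ ha0, one_mul]
  have hinv1 : Function.invFun (phi a b) j = a⁻¹ * j := by
    have h' := Function.leftInverse_invFun hinj (a⁻¹ * j)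
    rw [hphi1] at h'
    exact h' 
  -- compute α j
  have halpha1 : alphaP a b j = (j + a - 1) / (2 * a - 1) := by
    rw [alphaP, hinv1, phi, if_neg h3.1, if_neg h3.2, hbdef]
    rw [div_mul_eq_mul_div, div_add_one h21]
    congr 1
    field_simp
    ring
  -- Step 2 : invFun (phi a b) (α j) = (j + a - 1) / a
  have hx20 : (j + a - 1) / a ≠ 0 := by
    apply div_ne_zero _ ha0
    exact fun h => h4'.1 (by rw [h, mul_zero])
  have hx2ns : ¬ IsSquare ((j + a - 1) / a) := by
    intro hs
    apply h4'.2
    have : a * (j + a - 1) = ((j + a - 1) / a) * (a * a) := by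
      field_simp
    rw [this]
    exact hs.mul ⟨a, rfl⟩
  have hphi2 : phi a b ((j + a - 1) / a) = (j + a - 1) / (2 * a - 1) := by
    rw [phi, if_neg hx20, if_neg hx2ns, hbdef]
    field_simp
  have hinv2 : Function.invFun (phi a b) ((j + a - 1) / (2 * a - 1))
      = (j + a - 1) / a := by
    rw [← hphi2]
    exact Function.leftInverse_invFun hinj _
  -- Step 3 : final computation
  have hx3eq : (j + a - 1) / a - 1 = (j - 1) / a := by
    field_simp
    ring
  have hx3sq : IsSquare ((j - 1) / a) := by
    have : (j - 1) / a = (a * (j - 1)) * (a⁻¹ * a⁻¹) := by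
      field_simp
    rw [this]
    exact h2.2.mul ⟨a⁻¹, rfl⟩
  have hx30 : (j - 1) / a ≠ 0 := by
    apply div_ne_zero _ ha0
    exact fun h => h2.1 (by rw [h, mul_zero])
  rw [halpha1, alphaP, hinv2, hx3eq, phi, if_neg hx30, if_pos hx3sq]
  field_simp
  ring
end

section
/- Let q ≡ 3 (mod 4) be a prime power and let a ∈ F_q be a non-square with a ≠ -1. Then (a, a^{-1}) is a valid pair and the quadratic Latin square L[a, a^{-1}] is involutory, i.e., L_{i, L_{i,j}} = j for all i, j ∈ F_q. -/
open Classical in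
/-- The quadratic Latin square `L[a,b]`. -/
noncomputable def Lsq {F : Type*} [Field F] (a b : F) (i j : F) : F :=
  if j = i then i
  else if IsSquare (j - i) then i + a * (j - i)
  else i + b * (j - i)

lemma ns_mul_ns {F : Type*} [Field F] [Fintype F] [DecidableEq F]
    (h2 : ringChar F ≠ 2) {x y : F} (hx : ¬ IsSquare x) (hy : ¬ IsSquare y)
    (hx0 : x ≠ 0) (hy0 : y ≠ 0) : IsSquare (x * y) := by
  have := quadraticChar_neg_one_iff_not_isSquare.mpr hx
  have := quadraticChar_neg_one_iff_not_isSquare.mpr hy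
  have h : quadraticChar F (x * y) = 1 := by
    rw [map_mul]; rw [‹quadraticChar F x = -1›, ‹quadraticChar F y = -1›]; ring
  exact (quadraticChar_one_iff_isSquare (mul_ne_zero hx0 hy0)).mp h

lemma ns_mul_sq {F : Type*} [Field F] {x y : F} (hx : ¬ IsSquare x)
    (hy : IsSquare y) (hy0 : y ≠ 0) : ¬ IsSquare (x * y) := by
  intro ⟨t, ht⟩
  obtain ⟨s, hs⟩ := hy
  have hs0 : s ≠ 0 := by rintro rfl; simp at hs; exact hy0 hs
  exact hx ⟨t / s, by field_simp [hs] at ht ⊢; linear_combination ht - x * hs⟩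

/-- For `q ≡ 3 (mod 4)` and `a` a non-square with `a ≠ -1`, the pair
`(a, a⁻¹)` is valid and the quadratic Latin square `L[a, a⁻¹]` is involutory. -/
theorem stmt17 {F : Type*} [Field F] [Fintype F]
    (h4 : Fintype.card F % 4 = 3)
    (a : F) (ha0 : a ≠ 0) (hans : ¬ IsSquare a) (hne : a ≠ -1) :
    (a * a⁻¹ ≠ 0 ∧ IsSquare (a * a⁻¹)) ∧
    ((a - 1) * (a⁻¹ - 1) ≠ 0 ∧ IsSquare ((a - 1) * (a⁻¹ - 1))) ∧
    (∀ i j : F, Lsq a a⁻¹ i (Lsq a a⁻¹ i j) = j) := by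
  classical
  have h2 : ringChar F ≠ 2 := by
    intro h
    have := FiniteField.even_card_iff_char_two.mp h
    omega
  have hm1 : ¬ IsSquare (-1 : F) := by
    rw [FiniteField.isSquare_neg_one_iff]; omega
  have ha1 : a ≠ 1 := by rintro rfl; exact hans ⟨1, (one_mul 1).symm⟩
  have hains : ¬ IsSquare a⁻¹ := by
    intro ⟨s, hs⟩
    have hs0 : s ≠ 0 := by rintro rfl; rw [mul_zero, inv_eq_zero] at hs; exact ha0 hs
    refine hans ⟨s⁻¹, ?_⟩
    have : a * (s * s) = 1 := by rw [← hs]; field_simp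
    field_simp
    linear_combination this
  have hai0 : a⁻¹ ≠ 0 := inv_ne_zero ha0
  have key : a * a⁻¹ = 1 := mul_inv_cancel₀ ha0
  refine ⟨⟨by rw [key]; exact one_ne_zero, by rw [key]; exact ⟨1, (one_mul 1).symm⟩⟩, ?_, ?_⟩
  · have hsub1 : a - 1 ≠ 0 := sub_ne_zero.mpr ha1
    have hsub2 : a⁻¹ - 1 ≠ 0 := by
      intro h
      apply ha1
      have : a * (a⁻¹ - 1) = a * 0 := by rw [h]
      rw [mul_sub, mul_inv_cancel₀ ha0, mul_zero, mul_one, sub_eq_zero] at this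
      exact this.symm
    refine ⟨mul_ne_zero hsub1 hsub2, ?_⟩
    have heq : (a - 1) * (a⁻¹ - 1) = (-1 * a⁻¹) * (a - 1) ^ 2 := by
      field_simp; ring
    rw [heq]
    have h1 : IsSquare (-1 * a⁻¹ : F) := ns_mul_ns h2 hm1 hains (neg_ne_zero.mpr one_ne_zero) hai0
    exact h1.mul ⟨a - 1, sq (a - 1)⟩
  · intro i j
    by_cases hij : j = i
    · subst hij; simp [Lsq]
    · have hd0 : j - i ≠ 0 := sub_ne_zero.mpr hij
      by_cases hsq : IsSquare (j - i)
      · have hL : Lsq a a⁻¹ i j = i + a * (j - i) := by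
          rw [Lsq, if_neg hij, if_pos hsq]
        rw [hL, Lsq]
        have hd : i + a * (j - i) - i = a * (j - i) := by ring
        rw [if_neg (by intro h; exact mul_ne_zero ha0 hd0 (by rw [← hd, h]; ring)),
          if_neg (by rw [hd]; exact ns_mul_sq hans hsq hd0), hd]
        field_simp
        ring
      · have hL : Lsq a a⁻¹ i j = i + a⁻¹ * (j - i) := by
          rw [Lsq, if_neg hij, if_neg hsq]
        rw [hL, Lsq]
        have hd : i + a⁻¹ * (j - i) - i = a⁻¹ * (j - i) := by ring
        rw [if_neg (by intro h; exact mul_ne_zero hai0 hd0 (by rw [← hd, h]; ring)),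
          if_pos (by rw [hd]; exact ns_mul_ns h2 hains hsq hai0 hd0), hd]
        field_simp
        ring
end
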